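/- For any nonnegative n×n matrix A with λ(A) > 0, the max-algebraic dimension of V*(A) (the cardinality of its unique scaled basis of max extremals) equals the linear-algebraic dimension of its linear hull L(C(A)) = {x ∈ ℝⁿ : a_ij x_j = λ(A) x_i for all critical edges (i,j)}; both equal n(C(A)) + |non-critical nodes|, where n(C(A)) is the number of strongly connected components of the critical digraph. -/

import Mathlib

open Finset

/-- Max-times matrix product: `(A ⊗ B) i j = max_k (A i k * B k j)`. -/
noncomputable def mProd {n : ℕ} (A B : Matrix (Fin n) (Fin n) NNReal) :
    Matrix (Fin n) (Fin n) NNReal :=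
  fun i j => univ.sup fun k => A i k * B k j

/-- Max-algebraic matrix powers, `mPow A 0 = I`. -/
noncomputable def mPow {n : ℕ} (A : Matrix (Fin n) (Fin n) NNReal) :
    ℕ → Matrix (Fin n) (Fin n) NNReal
  | 0 => fun i j => if i = j then 1 else 0
  | k + 1 => mProd (mPow A k) A

/-- Kleene star `A* = I ⊕ A ⊕ ... ⊕ A^{n-1}` in max algebra. -/
noncomputable def klStar {n : ℕ} (A : Matrix (Fin n) (Fin n) NNReal) :
    Matrix (Fin n) (Fin n) NNReal :=
  fun i j => (Finset.range n).sup fun k => mPow A k i j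

/-- Partial "sums" `I ⊕ A ⊕ ... ⊕ A^m` of the Kleene star series. -/
noncomputable def kPartial {n : ℕ} (A : Matrix (Fin n) (Fin n) NNReal) (m : ℕ) :
    Matrix (Fin n) (Fin n) NNReal :=
  fun i j => (Finset.range (m + 1)).sup fun k => mPow A k i j

/-- The weight of the cycle given by the list `l` (with wrap-around edge). -/
def cycleWeight {n : ℕ} (A : Matrix (Fin n) (Fin n) NNReal) (l : List (Fin n)) : NNReal :=
  ((l.zip (l.rotate 1)).map fun p => A p.1 p.2).prod

/-- The geometric mean of a cycle: `w(σ,A)^{1/k}`. -/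
noncomputable def cycleMean {n : ℕ} (A : Matrix (Fin n) (Fin n) NNReal) (l : List (Fin n)) :
    NNReal :=
  (cycleWeight A l) ^ ((l.length : ℝ)⁻¹)

/-- The maximum cycle geometric mean `λ(A)`. -/
noncomputable def maxCycleMean {n : ℕ} (A : Matrix (Fin n) (Fin n) NNReal) : NNReal :=
  sSup {x | ∃ l : List (Fin n), l ≠ [] ∧ x = cycleMean A l}

/-- `(i,j)` is a critical edge: it lies on a cycle attaining `λ(A)`. -/
def criticalEdge {n : ℕ} (A : Matrix (Fin n) (Fin n) NNReal) (i j : Fin n) : Prop :=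
  ∃ l : List (Fin n), l ≠ [] ∧ cycleMean A l = maxCycleMean A ∧ (i, j) ∈ l.zip (l.rotate 1)

/-- Max-algebraic matrix-vector product. -/
noncomputable def mVec {n : ℕ} (A : Matrix (Fin n) (Fin n) NNReal) (x : Fin n → NNReal) :
    Fin n → NNReal :=
  fun i => univ.sup fun j => A i j * x j

/-- The subeigencone `V*(A) = {y : A ⊗ y ≤ λ(A) y}`. -/
def Vstar {n : ℕ} (A : Matrix (Fin n) (Fin n) NNReal) : Set (Fin n → NNReal) :=
  {y | ∀ i, mVec A y i ≤ maxCycleMean A * y i}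

/-- `i` is a critical node: it lies on a critical cycle. -/
def criticalNode {n : ℕ} (A : Matrix (Fin n) (Fin n) NNReal) (i : Fin n) : Prop :=
  ∃ j, criticalEdge A i j

/-- The linear hull `L(C(A)) = {x ∈ ℝⁿ : a_ij x_j = λ(A) x_i for critical (i,j)}`. -/
noncomputable def LC {n : ℕ} (A : Matrix (Fin n) (Fin n) NNReal) :
    Submodule ℝ (Fin n → ℝ) where
  carrier := {x | ∀ i j, criticalEdge A i j →
    (A i j : ℝ) * x j = (maxCycleMean A : ℝ) * x i}
  add_mem' := by
    intro a b ha hb i j h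
    simp only [Pi.add_apply, mul_add, ha i j h, hb i j h]
  zero_mem' := by intro i j h; simp
  smul_mem' := by
    intro c xv hxv i j h
    simp only [Pi.smul_apply, smul_eq_mul]
    rw [mul_left_comm, hxv i j h]; ring

/-- Scaled max extremals of `V*(A)`: the unique scaled basis. -/
def scaledMaxExtremals {n : ℕ} (A : Matrix (Fin n) (Fin n) NNReal) :
    Set (Fin n → NNReal) :=
  {y | y ∈ Vstar A ∧ univ.sup y = 1 ∧
    ∀ u w, u ∈ Vstar A → w ∈ Vstar A →
      y = (fun i => max (u i) (w i)) → y = u ∨ y = w}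

/-- Mutual reachability in the critical digraph, on critical nodes:
its classes are the strongly connected components of `C(A)`. -/
def critSetoid {n : ℕ} (A : Matrix (Fin n) (Fin n) NNReal) :
    Setoid {i : Fin n // criticalNode A i} :=
  ⟨fun a b => Relation.ReflTransGen (criticalEdge A) a.1 b.1 ∧
      Relation.ReflTransGen (criticalEdge A) b.1 a.1,
    ⟨fun _ => ⟨.refl, .refl⟩, fun h => ⟨h.2, h.1⟩,
      fun h1 h2 => ⟨h1.1.trans h2.1, h2.2.trans h1.2⟩⟩⟩

/-!
Put `B = λ(A)⁻¹ A`. Every closed walk of `B` has weight at most `1`, so the Kleene star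
`K = B*` records the heaviest walk between two nodes, and `B i j * K j i = 1` on every critical
edge `(i, j)`. Hence `K i j * K j i = 1` iff `i` and `j` lie in the same strongly connected
component of `C(A)` (or `i = j`).

Each `y ∈ V*(A)` is the max-combination of the columns of `K` with coefficients `y j`, so the
scaled extremals are the scaled columns, and two scaled columns `i, j` coincide iff
`K i j * K j i = 1`. Dually, an element of `L(C(A))` is determined by its values on one node of
each critical component and on the noncritical nodes, propagated along the same columns of `K`.
Both dimensions therefore count the components of `C(A)` plus the noncritical nodes.
-/

namespace MaxAlgebra

open scoped Matrix

section Walks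

variable {ι : Type*}

/-- A walk is given by its start `i` and the list `l` of the vertices visited after it. -/
def walkEdges (i : ι) (l : List ι) : List (ι × ι) := (i :: l).zip l

def walkEnd (i : ι) (l : List ι) : ι := l.getLastD i

def walkWeight (B : Matrix ι ι NNReal) (i : ι) (l : List ι) : NNReal :=
  ((walkEdges i l).map fun e => B e.1 e.2).prod

@[simp] lemma walkEdges_cons (i j : ι) (l : List ι) :
    walkEdges i (j :: l) = (i, j) :: walkEdges j l := rfl

@[simp] lemma walkEdges_nil (i : ι) : walkEdges i [] = [] := rfl

@[simp] lemma walkEnd_nil (i : ι) : walkEnd i [] = i := rfl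

@[simp] lemma walkEnd_cons (i j : ι) (l : List ι) : walkEnd i (j :: l) = walkEnd j l :=
  List.getLastD_cons

@[simp] lemma walkEnd_append (i : ι) (l₁ l₂ : List ι) :
    walkEnd i (l₁ ++ l₂) = walkEnd (walkEnd i l₁) l₂ := by
  induction l₁ generalizing i <;> simp [*]

lemma walkEdges_append (i : ι) (l₁ l₂ : List ι) :
    walkEdges i (l₁ ++ l₂) = walkEdges i l₁ ++ walkEdges (walkEnd i l₁) l₂ := by
  induction l₁ generalizing i <;> simp [*]

variable (B : Matrix ι ι NNReal)

@[simp] lemma walkWeight_nil (i : ι) : walkWeight B i [] = 1 := rfl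

@[simp] lemma walkWeight_cons (i j : ι) (l : List ι) :
    walkWeight B i (j :: l) = B i j * walkWeight B j l := rfl

lemma walkWeight_singleton (i j : ι) : walkWeight B i [j] = B i j := mul_one _

lemma walkWeight_append (i : ι) (l₁ l₂ : List ι) :
    walkWeight B i (l₁ ++ l₂) = walkWeight B i l₁ * walkWeight B (walkEnd i l₁) l₂ := by
  simp [walkWeight, walkEdges_append]

variable {B}

lemma exists_eq_append_cons_of_mem_walkEdges {i u v : ι} {l : List ι}
    (h : (u, v) ∈ walkEdges i l) : ∃ l₁ l₂, l = l₁ ++ v :: l₂ ∧ walkEnd i l₁ = u := by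
  induction l generalizing i with
  | nil => simp at h
  | cons j l ih =>
    rcases List.mem_cons.mp h with h | h
    · obtain ⟨rfl, rfl⟩ := Prod.mk.inj h
      exact ⟨[], l, rfl, rfl⟩
    · obtain ⟨l₁, l₂, rfl, hend⟩ := ih h
      exact ⟨j :: l₁, l₂, rfl, by simpa using hend⟩

lemma reflTransGen_walkEnd {R : ι → ι → Prop} {i : ι} {l : List ι}
    (h : ∀ e ∈ walkEdges i l, R e.1 e.2) : Relation.ReflTransGen R i (walkEnd i l) := by
  induction l generalizing i with
  | nil => exact .refl
  | cons j l ih =>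
    simp only [walkEdges_cons, List.forall_mem_cons] at h
    simpa using .head h.1 (ih h.2)

/-- Rotating a closed walk so that it starts with the edge `(u, v)`. -/
lemma exists_walk_of_mem_walkEdges {i u v : ι} {l : List ι} (hl : walkEnd i l = i)
    (h : (u, v) ∈ walkEdges i l) :
    ∃ p, walkEnd v p = u ∧ p.length + 1 = l.length ∧
      B u v * walkWeight B v p = walkWeight B i l := by
  obtain ⟨l₁, l₂, rfl, hu⟩ := exists_eq_append_cons_of_mem_walkEdges h
  have hv : walkEnd v l₂ = i := by simpa [hu] using hl
  refine ⟨l₂ ++ l₁, by simp [hv, hu], by simp; omega, ?_⟩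
  rw [walkWeight_append, walkWeight_append, hv, hu, walkWeight_cons]
  ring

lemma walkWeight_smul (c : NNReal) (i : ι) (l : List ι) :
    walkWeight (c • B) i l = c ^ l.length * walkWeight B i l := by
  induction l generalizing i with
  | nil => simp
  | cons j l ih =>
    simp only [walkWeight_cons, ih, Matrix.smul_apply, smul_eq_mul, List.length_cons, pow_succ]
    ring

lemma walkWeight_mul_le {u : ι → NNReal} (hu : ∀ i k, B i k * u k ≤ u i) (i : ι)
    (l : List ι) : walkWeight B i l * u (walkEnd i l) ≤ u i := by
  induction l generalizing i with
  | nil => simp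
  | cons j l ih =>
    calc walkWeight B i (j :: l) * u (walkEnd i (j :: l))
        = B i j * (walkWeight B j l * u (walkEnd j l)) := by simp [mul_assoc]
      _ ≤ B i j * u j := by gcongr; exact ih j
      _ ≤ u i := hu i j

end Walks

section Powers

variable {n : ℕ} (A : Matrix (Fin n) (Fin n) NNReal)

lemma mPow_succ_apply (k : ℕ) (i j : Fin n) :
    mPow A (k + 1) i j = univ.sup fun m => mPow A k i m * A m j := rfl

lemma walkWeight_le_mPow (i : Fin n) (l : List (Fin n)) :
    walkWeight A i l ≤ mPow A l.length i (walkEnd i l) := by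
  induction l using List.reverseRecOn with
  | nil => simp [mPow]
  | append_singleton l j ih =>
    rw [walkWeight_append, walkWeight_singleton, List.length_append, List.length_singleton,
      walkEnd_append, walkEnd_cons, walkEnd_nil, mPow_succ_apply]
    exact (mul_le_mul_left ih _).trans
      (Finset.le_sup (f := fun m => mPow A l.length i m * A m j) (mem_univ _))

lemma exists_walk_eq_mPow {k : ℕ} {i j : Fin n} (h : mPow A k i j ≠ 0) :
    ∃ l, l.length = k ∧ walkEnd i l = j ∧ walkWeight A i l = mPow A k i j := by
  induction k generalizing j with
  | zero =>
    have hij : i = j := by by_contra hij; simp [mPow, hij] at h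
    exact ⟨[], rfl, hij, by simp [mPow, hij]⟩
  | succ k ih =>
    obtain ⟨m, -, hm⟩ := Finset.exists_mem_eq_sup univ ⟨i, mem_univ i⟩
      (fun m => mPow A k i m * A m j)
    have hsucc : mPow A (k + 1) i j = mPow A k i m * A m j := by rw [mPow_succ_apply, hm]
    obtain ⟨l, hlen, hend, hw⟩ := ih (j := m) (left_ne_zero_of_mul (hsucc ▸ h))
    exact ⟨l ++ [j], by simp [hlen], by simp [hend],
      by rw [walkWeight_append, hend, hw, hsucc, walkWeight_singleton]⟩

end Powers

section KleeneStar

variable {n : ℕ} {B : Matrix (Fin n) (Fin n) NNReal}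

/-- `λ(B) ≤ 1`, phrased through walks. -/
def ClosedWalksLeOne (B : Matrix (Fin n) (Fin n) NNReal) : Prop :=
  ∀ i l, walkEnd i l = i → walkWeight B i l ≤ 1

/-- Pigeonhole on the endpoints of the prefixes of the walk. -/
lemma exists_closed_subwalk (i : Fin n) {l : List (Fin n)} (hl : n ≤ l.length) :
    ∃ l₁ l₂ l₃, l = l₁ ++ l₂ ++ l₃ ∧ l₂ ≠ [] ∧ walkEnd (walkEnd i l₁) l₂ = walkEnd i l₁ := by
  obtain ⟨a, b, hab, heq⟩ := Fintype.exists_ne_map_eq_of_card_lt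
    (fun k : Fin (l.length + 1) => walkEnd i (l.take k)) (by simp; omega)
  wlog hlt : a < b generalizing a b
  · exact this b a hab.symm heq.symm (lt_of_le_of_ne (not_lt.mp hlt) hab.symm)
  have hab' : (a : ℕ) < b := hlt
  have hb : (b : ℕ) ≤ l.length := Nat.lt_succ_iff.mp b.2
  have hprefix : l.take a ++ (l.take b).drop a = l.take b := by
    conv_rhs => rw [← List.take_append_drop a (l.take b)]
    rw [List.take_take, min_eq_left hab'.le]
  refine ⟨l.take a, (l.take b).drop a, l.drop b, by rw [hprefix, List.take_append_drop], ?_, ?_⟩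
  · simp only [ne_eq, List.drop_eq_nil_iff, List.length_take]
    omega
  · rw [← walkEnd_append, hprefix]
    exact heq.symm

lemma walkWeight_le_klStar (hB : ClosedWalksLeOne B) (i : Fin n) (l : List (Fin n)) :
    walkWeight B i l ≤ klStar B i (walkEnd i l) := by
  induction hk : l.length using Nat.strong_induction_on generalizing l with
  | _ k ih =>
    by_cases hkn : k < n
    · exact (walkWeight_le_mPow B i l).trans
        (Finset.le_sup (f := fun k => mPow B k i _) (mem_range.mpr (hk ▸ hkn)))
    obtain ⟨l₁, l₂, l₃, rfl, hl₂, hclosed⟩ := exists_closed_subwalk i (l := l) (by omega)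
    have hshorter : (l₁ ++ l₃).length < k := by
      have := List.length_pos_iff.mpr hl₂
      simp only [List.length_append] at hk ⊢
      omega
    set m := walkEnd i l₁
    calc walkWeight B i (l₁ ++ l₂ ++ l₃)
        = walkWeight B i l₁ * walkWeight B m l₂ * walkWeight B m l₃ := by
          rw [walkWeight_append, walkWeight_append, walkEnd_append, hclosed]
      _ ≤ walkWeight B i l₁ * 1 * walkWeight B m l₃ := by
          gcongr
          exact hB _ _ hclosed
      _ = walkWeight B i (l₁ ++ l₃) := by rw [mul_one, walkWeight_append]
      _ ≤ klStar B i (walkEnd i (l₁ ++ l₃)) := ih _ hshorter _ rfl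
      _ = klStar B i (walkEnd i (l₁ ++ l₂ ++ l₃)) := by simp [m, hclosed]

lemma exists_walk_eq_klStar (hB : ClosedWalksLeOne B) (i j : Fin n) :
    ∃ l, walkEnd i l = j ∧ walkWeight B i l = klStar B i j := by
  by_cases h0 : klStar B i j = 0
  · refine ⟨[j], by simp, le_antisymm ?_ (by simp [h0])⟩
    simpa using walkWeight_le_klStar hB i [j]
  obtain ⟨k, -, hk⟩ := Finset.exists_mem_eq_sup (range n) ⟨0, by simp [i.pos]⟩
    (fun k => mPow B k i j)
  have hk : klStar B i j = mPow B k i j := hk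
  obtain ⟨l, -, hend, hw⟩ := exists_walk_eq_mPow B (hk ▸ h0)
  exact ⟨l, hend, hw.trans hk.symm⟩

lemma klStar_self (hB : ClosedWalksLeOne B) (i : Fin n) : klStar B i i = 1 := by
  obtain ⟨l, hend, hw⟩ := exists_walk_eq_klStar hB i i
  exact le_antisymm (hw ▸ hB i l hend) (by simpa using walkWeight_le_klStar hB i [])

lemma klStar_mul_klStar_le (hB : ClosedWalksLeOne B) (i j k : Fin n) :
    klStar B i j * klStar B j k ≤ klStar B i k := by
  obtain ⟨l₁, hend₁, hw₁⟩ := exists_walk_eq_klStar hB i j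
  obtain ⟨l₂, hend₂, hw₂⟩ := exists_walk_eq_klStar hB j k
  have := walkWeight_le_klStar hB i (l₁ ++ l₂)
  rwa [walkWeight_append, walkEnd_append, hend₁, hend₂, hw₁, hw₂] at this

lemma mul_klStar_le (hB : ClosedWalksLeOne B) (i j k : Fin n) :
    B i j * klStar B j k ≤ klStar B i k := by
  obtain ⟨l, hend, hw⟩ := exists_walk_eq_klStar hB j k
  rw [← hw, ← walkWeight_cons]
  simpa [hend] using walkWeight_le_klStar hB i (j :: l)

lemma klStar_mul_klStar_le_one (hB : ClosedWalksLeOne B) (i j : Fin n) :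
    klStar B i j * klStar B j i ≤ 1 :=
  (klStar_mul_klStar_le hB i j i).trans_eq (klStar_self hB i)

lemma klStar_mul_le (hB : ClosedWalksLeOne B) {u : Fin n → NNReal}
    (hu : ∀ i k, B i k * u k ≤ u i) (i j : Fin n) : klStar B i j * u j ≤ u i := by
  obtain ⟨l, hend, hw⟩ := exists_walk_eq_klStar hB i j
  simpa [hw, hend] using walkWeight_mul_le hu i l

lemma klStar_mul_klStar_eq_one_trans (hB : ClosedWalksLeOne B) {i j k : Fin n}
    (hij : klStar B i j * klStar B j i = 1) (hjk : klStar B j k * klStar B k j = 1) :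
    klStar B i k * klStar B k i = 1 := by
  refine le_antisymm (klStar_mul_klStar_le_one hB i k) ?_
  calc 1 = (klStar B i j * klStar B j i) * (klStar B j k * klStar B k j) := by
        rw [hij, hjk, one_mul]
    _ = (klStar B i j * klStar B j k) * (klStar B k j * klStar B j i) := by ring
    _ ≤ klStar B i k * klStar B k i := by
        gcongr <;> exact klStar_mul_klStar_le hB _ _ _

lemma klStar_eq_mul_of_mul_eq_one (hB : ClosedWalksLeOne B) {i j : Fin n}
    (h : klStar B i j * klStar B j i = 1) (k : Fin n) :
    klStar B k i = klStar B k j * klStar B j i := by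
  refine le_antisymm ?_ (klStar_mul_klStar_le hB k j i)
  calc klStar B k i = klStar B k i * klStar B i j * klStar B j i := by
        rw [mul_assoc, h, mul_one]
    _ ≤ klStar B k j * klStar B j i := by gcongr; exact klStar_mul_klStar_le hB k i j

end KleeneStar

section CycleMean

variable {n : ℕ} (A : Matrix (Fin n) (Fin n) NNReal)

lemma walkEdges_append_singleton_self (i : Fin n) (t : List (Fin n)) :
    walkEdges i (t ++ [i]) = (i :: t).zip ((i :: t).rotate 1) := by
  rw [List.rotate_cons_succ, List.rotate_zero, walkEdges, ← List.cons_append,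
    ← List.append_nil (t ++ [i]), List.zip_append (by simp)]
  simp

lemma cycleWeight_cons (i : Fin n) (t : List (Fin n)) :
    cycleWeight A (i :: t) = walkWeight A i (t ++ [i]) := by
  rw [walkWeight, walkEdges_append_singleton_self, cycleWeight]

lemma cycleMean_le_iff {l : List (Fin n)} (hl : l ≠ []) (x : NNReal) :
    cycleMean A l ≤ x ↔ cycleWeight A l ≤ x ^ l.length := by
  rw [cycleMean, NNReal.rpow_inv_le_iff (Nat.cast_pos.mpr (List.length_pos_iff.mpr hl)),
    NNReal.rpow_natCast]

lemma cycleMean_eq_iff {l : List (Fin n)} (hl : l ≠ []) (x : NNReal) :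
    cycleMean A l = x ↔ cycleWeight A l = x ^ l.length := by
  rw [cycleMean, NNReal.rpow_inv_eq_iff (Nat.cast_ne_zero.mpr (mt List.length_eq_zero_iff.mp hl)),
    NNReal.rpow_natCast]

lemma bddAbove_cycleMean : BddAbove {x | ∃ l : List (Fin n), l ≠ [] ∧ x = cycleMean A l} := by
  set E := univ.sup fun e : Fin n × Fin n => A e.1 e.2
  refine ⟨E, ?_⟩
  rintro _ ⟨l, hl, rfl⟩
  rw [cycleMean_le_iff A hl, cycleWeight]
  refine (List.prod_le_pow_card _ E ?_).trans_eq (by simp)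
  simp only [List.mem_map]
  rintro _ ⟨e, -, rfl⟩
  exact Finset.le_sup (f := fun e : Fin n × Fin n => A e.1 e.2) (mem_univ e)

lemma cycleWeight_le_pow_length {l : List (Fin n)} (hl : l ≠ []) :
    cycleWeight A l ≤ maxCycleMean A ^ l.length :=
  (cycleMean_le_iff A hl _).mp (le_csSup (bddAbove_cycleMean A) ⟨l, hl, rfl⟩)

lemma walkWeight_le_pow_length {i : Fin n} {l : List (Fin n)} (hl : walkEnd i l = i) :
    walkWeight A i l ≤ maxCycleMean A ^ l.length := by
  obtain rfl | ⟨t, b, rfl⟩ := l.eq_nil_or_concat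
  · simp
  obtain rfl : i = b := by simpa using hl.symm
  simpa [← cycleWeight_cons] using cycleWeight_le_pow_length A (List.cons_ne_nil i t)

lemma criticalEdge_of_mem_walkEdges {i u v : Fin n} {l : List (Fin n)} (hl : walkEnd i l = i)
    (hw : walkWeight A i l = maxCycleMean A ^ l.length) (huv : (u, v) ∈ walkEdges i l) :
    criticalEdge A u v := by
  obtain rfl | ⟨t, b, rfl⟩ := l.eq_nil_or_concat
  · simp at huv
  obtain rfl : i = b := by simpa using hl.symm
  refine ⟨i :: t, List.cons_ne_nil i t, ?_, ?_⟩
  · rw [cycleMean_eq_iff A (List.cons_ne_nil i t), cycleWeight_cons]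
    simpa using hw
  · simpa [walkEdges_append_singleton_self] using huv

lemma exists_walk_of_criticalEdge {u v : Fin n} (h : criticalEdge A u v) :
    ∃ p, walkEnd v p = u ∧ walkWeight A u (v :: p) = maxCycleMean A ^ (p.length + 1) := by
  obtain ⟨c, hc, hmean, huv⟩ := h
  obtain ⟨i, t, rfl⟩ := List.exists_cons_of_ne_nil hc
  rw [← walkEdges_append_singleton_self] at huv
  obtain ⟨p, hend, hlen, hw⟩ := exists_walk_of_mem_walkEdges (B := A) (by simp) huv
  refine ⟨p, hend, ?_⟩
  rw [walkWeight_cons, hw, ← cycleWeight_cons, (cycleMean_eq_iff A hc _).mp hmean, hlen]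
  simp

end CycleMean

section Critical

variable {n : ℕ} {A : Matrix (Fin n) (Fin n) NNReal}

variable (A) in
noncomputable def normalize : Matrix (Fin n) (Fin n) NNReal := (maxCycleMean A)⁻¹ • A

lemma walkWeight_normalize (i : Fin n) (l : List (Fin n)) :
    walkWeight (normalize A) i l = (maxCycleMean A ^ l.length)⁻¹ * walkWeight A i l := by
  rw [normalize, walkWeight_smul, inv_pow]

lemma walkWeight_normalize_eq_one_iff (hA : maxCycleMean A ≠ 0) {i : Fin n} {l : List (Fin n)} :
    walkWeight (normalize A) i l = 1 ↔ walkWeight A i l = maxCycleMean A ^ l.length := by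
  rw [walkWeight_normalize, inv_mul_eq_one₀ (pow_ne_zero _ hA), eq_comm]

lemma closedWalksLeOne_normalize (hA : maxCycleMean A ≠ 0) : ClosedWalksLeOne (normalize A) := by
  intro i l hl
  rw [walkWeight_normalize, inv_mul_le_one₀ (pow_pos (pos_iff_ne_zero.mpr hA) _)]
  exact walkWeight_le_pow_length A hl

lemma normalize_mul_klStar_eq_one (hA : maxCycleMean A ≠ 0) {i j : Fin n}
    (h : criticalEdge A i j) : normalize A i j * klStar (normalize A) j i = 1 := by
  have hB := closedWalksLeOne_normalize hA
  obtain ⟨p, hend, hw⟩ := exists_walk_of_criticalEdge A h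
  refine le_antisymm ((mul_klStar_le hB i j i).trans_eq (klStar_self hB i)) ?_
  calc 1 = normalize A i j * walkWeight (normalize A) j p :=
        ((walkWeight_normalize_eq_one_iff hA).mpr hw).symm
    _ ≤ normalize A i j * klStar (normalize A) j i := by
        gcongr
        simpa [hend] using walkWeight_le_klStar hB j p

lemma apply_ne_zero_of_criticalEdge (hA : maxCycleMean A ≠ 0) {i j : Fin n}
    (h : criticalEdge A i j) : A i j ≠ 0 := by
  intro h0
  simpa [normalize, h0] using normalize_mul_klStar_eq_one hA h

lemma normalize_mul_klStar_of_criticalEdge (hA : maxCycleMean A ≠ 0) {i j : Fin n}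
    (h : criticalEdge A i j) (r : Fin n) :
    normalize A i j * klStar (normalize A) j r = klStar (normalize A) i r := by
  have hB := closedWalksLeOne_normalize hA
  refine le_antisymm (mul_klStar_le hB i j r) ?_
  calc klStar (normalize A) i r
      = normalize A i j * klStar (normalize A) j i * klStar (normalize A) i r := by
        rw [normalize_mul_klStar_eq_one hA h, one_mul]
    _ = normalize A i j * (klStar (normalize A) j i * klStar (normalize A) i r) := mul_assoc ..
    _ ≤ normalize A i j * klStar (normalize A) j r := by
        gcongr
        exact klStar_mul_klStar_le hB j i r

lemma mul_klStar_of_criticalEdge (hA : maxCycleMean A ≠ 0) {i j : Fin n}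
    (h : criticalEdge A i j) (r : Fin n) :
    A i j * klStar (normalize A) j r = maxCycleMean A * klStar (normalize A) i r := by
  rw [← normalize_mul_klStar_of_criticalEdge hA h r, normalize, Matrix.smul_apply, smul_eq_mul,
    ← mul_assoc, ← mul_assoc, mul_inv_cancel₀ hA, one_mul]

lemma klStar_mul_klStar_eq_one_of_criticalEdge (hA : maxCycleMean A ≠ 0) {i j : Fin n}
    (h : criticalEdge A i j) : klStar (normalize A) i j * klStar (normalize A) j i = 1 := by
  have hB := closedWalksLeOne_normalize hA
  refine le_antisymm (klStar_mul_klStar_le_one hB i j) ?_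
  calc 1 = normalize A i j * klStar (normalize A) j i := (normalize_mul_klStar_eq_one hA h).symm
    _ ≤ klStar (normalize A) i j * klStar (normalize A) j i := by
        gcongr
        simpa using walkWeight_le_klStar hB i [j]

lemma reflTransGen_criticalEdge_iff (hA : maxCycleMean A ≠ 0) {i j : Fin n} :
    Relation.ReflTransGen (criticalEdge A) i j ↔
      klStar (normalize A) i j * klStar (normalize A) j i = 1 := by
  have hB := closedWalksLeOne_normalize hA
  constructor
  · intro h
    induction h with
    | refl => rw [klStar_self hB, one_mul]
    | tail _ hbc ih =>
      exact klStar_mul_klStar_eq_one_trans hB ih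
        (klStar_mul_klStar_eq_one_of_criticalEdge hA hbc)
  · intro h
    obtain ⟨l₁, hend₁, hw₁⟩ := exists_walk_eq_klStar hB i j
    obtain ⟨l₂, hend₂, hw₂⟩ := exists_walk_eq_klStar hB j i
    have hclosed : walkEnd i (l₁ ++ l₂) = i := by simp [hend₁, hend₂]
    have hw : walkWeight A i (l₁ ++ l₂) = maxCycleMean A ^ (l₁ ++ l₂).length := by
      rw [← walkWeight_normalize_eq_one_iff hA, walkWeight_append, hend₁, hw₁, hw₂, h]
    rw [← hend₁]
    refine reflTransGen_walkEnd fun e he => criticalEdge_of_mem_walkEdges A hclosed hw ?_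
    rw [walkEdges_append]
    exact List.mem_append_left _ he

lemma reflTransGen_criticalEdge_symm (hA : maxCycleMean A ≠ 0) {i j : Fin n}
    (h : Relation.ReflTransGen (criticalEdge A) i j) :
    Relation.ReflTransGen (criticalEdge A) j i := by
  rw [reflTransGen_criticalEdge_iff hA] at h ⊢
  rwa [mul_comm]

lemma eq_of_reflTransGen_of_not_criticalNode {i j : Fin n}
    (h : Relation.ReflTransGen (criticalEdge A) i j) (hi : ¬ criticalNode A i) : i = j := by
  rcases h.cases_head with h | ⟨k, hik, -⟩
  · exact h
  · exact absurd ⟨k, hik⟩ hi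

end Critical

section NodeClass

variable {n : ℕ} (A : Matrix (Fin n) (Fin n) NNReal)

/-- The strongly connected components of `C(A)` together with the noncritical nodes. -/
abbrev NodeClass := Quotient (critSetoid A) ⊕ {i : Fin n // ¬ criticalNode A i}

open Classical in
noncomputable def toNodeClass (i : Fin n) : NodeClass A :=
  if h : criticalNode A i then .inl ⟦⟨i, h⟩⟧ else .inr ⟨i, h⟩

variable {A}

noncomputable def NodeClass.rep : NodeClass A → Fin n
  | .inl c => c.out.1
  | .inr i => i.1

lemma toNodeClass_rep (s : NodeClass A) : toNodeClass A s.rep = s := by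
  rcases s with c | ⟨i, hi⟩
  · simp [toNodeClass, NodeClass.rep, c.out.2]
  · simp [toNodeClass, NodeClass.rep, hi]

lemma toNodeClass_eq_iff (hA : maxCycleMean A ≠ 0) {i j : Fin n} :
    toNodeClass A i = toNodeClass A j ↔ Relation.ReflTransGen (criticalEdge A) i j := by
  by_cases hi : criticalNode A i <;> by_cases hj : criticalNode A j <;>
    simp only [toNodeClass, hi, hj, dite_true, dite_false, Sum.inl.injEq, Sum.inr.injEq,
      reduceCtorEq, false_iff, Quotient.eq, Subtype.mk.injEq]
  · exact ⟨And.left, fun h => ⟨h, reflTransGen_criticalEdge_symm hA h⟩⟩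
  · exact fun h =>
      hj (eq_of_reflTransGen_of_not_criticalNode (reflTransGen_criticalEdge_symm hA h) hj ▸ hi)
  · exact fun h => hi (eq_of_reflTransGen_of_not_criticalNode h hi ▸ hj)
  · exact ⟨fun h => h ▸ .refl, fun h => eq_of_reflTransGen_of_not_criticalNode h hi⟩

end NodeClass

section LinearHull

variable {n : ℕ} {A : Matrix (Fin n) (Fin n) NNReal}

lemma apply_eq_mul_klStar_of_mem_LC (hA : maxCycleMean A ≠ 0) {x : Fin n → ℝ} (hx : x ∈ LC A)
    {r i : Fin n} (h : Relation.ReflTransGen (criticalEdge A) r i) :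
    x i = x r * klStar (normalize A) i r := by
  induction h with
  | refl => simp [klStar_self (closedWalksLeOne_normalize hA)]
  | @tail b c _ hbc ih =>
    have hK : (A b c : ℝ) * klStar (normalize A) c r =
        maxCycleMean A * klStar (normalize A) b r := by
      exact_mod_cast mul_klStar_of_criticalEdge hA hbc r
    apply mul_left_cancel₀ (NNReal.coe_ne_zero.mpr (apply_ne_zero_of_criticalEdge hA hbc))
    rw [hx b c hbc, ih]
    linear_combination -(x r) * hK

lemma reflTransGen_rep_toNodeClass (hA : maxCycleMean A ≠ 0) (i : Fin n) :
    Relation.ReflTransGen (criticalEdge A) (toNodeClass A i).rep i :=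
  (toNodeClass_eq_iff hA).mp (toNodeClass_rep _)

noncomputable def equivLC (hA : maxCycleMean A ≠ 0) : LC A ≃ₗ[ℝ] (NodeClass A → ℝ) where
  toFun x s := x.1 s.rep
  invFun y := ⟨fun i => y (toNodeClass A i) * klStar (normalize A) i (toNodeClass A i).rep, by
    intro i j hij
    have hji : toNodeClass A j = toNodeClass A i :=
      (toNodeClass_eq_iff hA).mpr (reflTransGen_criticalEdge_symm hA (.single hij))
    have hK : (A i j : ℝ) * klStar (normalize A) j (toNodeClass A i).rep =
        maxCycleMean A * klStar (normalize A) i (toNodeClass A i).rep := by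
      exact_mod_cast mul_klStar_of_criticalEdge hA hij _
    simp only [hji]
    linear_combination y (toNodeClass A i) * hK⟩
  map_add' _ _ := rfl
  map_smul' _ _ := rfl
  left_inv x := Subtype.ext <| funext fun i =>
    (apply_eq_mul_klStar_of_mem_LC hA x.2 (reflTransGen_rep_toNodeClass hA i)).symm
  right_inv y := funext fun s => by
    simp [toNodeClass_rep, klStar_self (closedWalksLeOne_normalize hA)]

lemma finrank_LC (hA : maxCycleMean A ≠ 0) :
    Module.finrank ℝ (LC A) = Nat.card (NodeClass A) := by
  have := Fintype.ofFinite (NodeClass A)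
  rw [(equivLC hA).finrank_eq, Module.finrank_fintype_fun_eq_card, Nat.card_eq_fintype_card]

end LinearHull

section Extremals

lemma eq_bot_or_exists_eq_of_extremal {α ι : Type*} [SemilatticeSup α] [OrderBot α] {S : Set α}
    (hbot : ⊥ ∈ S) (hsup : ∀ u ∈ S, ∀ w ∈ S, u ⊔ w ∈ S) {y : α}
    (hy : ∀ u w, u ∈ S → w ∈ S → y = u ⊔ w → y = u ∨ y = w) (s : Finset ι) (f : ι → α)
    (hf : ∀ j ∈ s, f j ∈ S) (h : y = s.sup f) : y = ⊥ ∨ ∃ j ∈ s, y = f j := by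
  classical
  induction s using Finset.induction_on with
  | empty => exact .inl h
  | insert a s _ ih =>
    rw [Finset.sup_insert] at h
    have hs : s.sup f ∈ S := Finset.sup_mem S hbot hsup s f fun j hj => hf j (mem_insert_of_mem hj)
    rcases hy _ _ (hf a (mem_insert_self a s)) hs h with h | h
    · exact .inr ⟨a, mem_insert_self a s, h⟩
    · rcases ih (fun j hj => hf j (mem_insert_of_mem hj)) h with h | ⟨j, hj, h⟩
      · exact .inl h
      · exact .inr ⟨j, mem_insert_of_mem hj, h⟩

variable {n : ℕ}

noncomputable def supScale (v : Fin n → NNReal) : Fin n → NNReal := fun i => v i * (univ.sup v)⁻¹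

lemma sup_supScale {v : Fin n → NNReal} (hv : univ.sup v ≠ 0) : univ.sup (supScale v) = 1 := by
  unfold supScale
  rw [← NNReal.finset_sup_mul, mul_inv_cancel₀ hv]

lemma supScale_of_sup_eq_one {v : Fin n → NNReal} (hv : univ.sup v = 1) : supScale v = v := by
  funext i
  unfold supScale
  rw [hv, inv_one, mul_one]

lemma supScale_mul_const (v : Fin n → NNReal) {c : NNReal} (hc : c ≠ 0) :
    supScale (fun i => v i * c) = supScale v := by
  funext i
  unfold supScale
  rw [← NNReal.finset_sup_mul, mul_inv, mul_mul_mul_comm,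
    mul_inv_cancel₀ hc, mul_one]

variable {A : Matrix (Fin n) (Fin n) NNReal}

lemma zero_mem_Vstar : (0 : Fin n → NNReal) ∈ Vstar A := by
  intro i
  simp [mVec]

lemma sup_mem_Vstar {u w : Fin n → NNReal} (hu : u ∈ Vstar A) (hw : w ∈ Vstar A) :
    u ⊔ w ∈ Vstar A := by
  intro i
  refine Finset.sup_le fun k _ => ?_
  rw [Pi.sup_apply, Pi.sup_apply, mul_max, mul_max]
  exact max_le_max ((Finset.le_sup (f := fun k => A i k * u k) (mem_univ k)).trans (hu i))
    ((Finset.le_sup (f := fun k => A i k * w k) (mem_univ k)).trans (hw i))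

lemma mem_Vstar_iff (hA : maxCycleMean A ≠ 0) {u : Fin n → NNReal} :
    u ∈ Vstar A ↔ ∀ i k, normalize A i k * u k ≤ u i := by
  simp only [Vstar, Set.mem_ofPred_eq, mVec, Finset.sup_le_iff, mem_univ, true_implies, normalize,
    Matrix.smul_apply, smul_eq_mul, mul_assoc, inv_mul_le_iff₀ (pos_iff_ne_zero.mpr hA)]

lemma klStar_mul_le_of_mem_Vstar (hA : maxCycleMean A ≠ 0) {u : Fin n → NNReal}
    (hu : u ∈ Vstar A) (i j : Fin n) : klStar (normalize A) i j * u j ≤ u i :=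
  klStar_mul_le (closedWalksLeOne_normalize hA) ((mem_Vstar_iff hA).mp hu) i j

lemma klStar_col_mul_mem_Vstar (hA : maxCycleMean A ≠ 0) (j : Fin n) (c : NNReal) :
    (fun i => klStar (normalize A) i j * c) ∈ Vstar A := by
  rw [mem_Vstar_iff hA]
  intro i k
  rw [← mul_assoc]
  gcongr
  exact mul_klStar_le (closedWalksLeOne_normalize hA) i k j

lemma sup_klStar_col_ne_zero (hA : maxCycleMean A ≠ 0) (j : Fin n) :
    univ.sup ((klStar (normalize A))ᵀ j) ≠ 0 := by
  refine (zero_lt_one.trans_le ?_).ne'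
  rw [← klStar_self (closedWalksLeOne_normalize hA) j]
  exact Finset.le_sup (f := (klStar (normalize A))ᵀ j) (mem_univ j)

lemma supScale_klStar_col_mem (hA : maxCycleMean A ≠ 0) (j : Fin n) :
    supScale ((klStar (normalize A))ᵀ j) ∈ scaledMaxExtremals A := by
  set M := univ.sup ((klStar (normalize A))ᵀ j)
  refine ⟨klStar_col_mul_mem_Vstar hA j M⁻¹, sup_supScale (sup_klStar_col_ne_zero hA j), ?_⟩
  intro u w hu hw h
  have hdom : ∀ v ∈ Vstar A, v j = M⁻¹ → (∀ i, v i ≤ supScale ((klStar (normalize A))ᵀ j) i) →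
      supScale ((klStar (normalize A))ᵀ j) = v := fun v hv hvj hle => funext fun i =>
    le_antisymm (by
      change klStar (normalize A) i j * M⁻¹ ≤ v i
      rw [← hvj]
      exact klStar_mul_le_of_mem_Vstar hA hv i j) (hle i)
  have hj : max (u j) (w j) = M⁻¹ := by
    simpa [supScale, klStar_self (closedWalksLeOne_normalize hA), M] using (congrFun h j).symm
  rcases max_choice (u j) (w j) with hmax | hmax
  · exact .inl (hdom u hu (hmax ▸ hj) fun i => (le_max_left _ _).trans (congrFun h i).ge)
  · exact .inr (hdom w hw (hmax ▸ hj) fun i => (le_max_right _ _).trans (congrFun h i).ge)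

lemma exists_supScale_klStar_col_eq (hA : maxCycleMean A ≠ 0) {y : Fin n → NNReal}
    (hy : y ∈ scaledMaxExtremals A) : ∃ j, supScale ((klStar (normalize A))ᵀ j) = y := by
  obtain ⟨hyV, hsup, hext⟩ := hy
  have hrep : y = univ.sup fun j i => klStar (normalize A) i j * y j := by
    funext i
    rw [Finset.sup_apply]
    refine le_antisymm ?_ (Finset.sup_le fun j _ => klStar_mul_le_of_mem_Vstar hA hyV i j)
    calc y i = klStar (normalize A) i i * y i := by
          rw [klStar_self (closedWalksLeOne_normalize hA), one_mul]
      _ ≤ _ := Finset.le_sup (f := fun j => klStar (normalize A) i j * y j) (mem_univ i)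
  have hy0 : y ≠ 0 := by
    rintro rfl
    rw [Pi.zero_def, ← bot_eq_zero', Finset.sup_bot] at hsup
    simp at hsup
  rcases eq_bot_or_exists_eq_of_extremal zero_mem_Vstar (fun u hu w hw => sup_mem_Vstar hu hw)
      hext univ _ (fun j _ => klStar_col_mul_mem_Vstar hA j (y j)) hrep with h0 | ⟨j, -, hj⟩
  · exact absurd h0 hy0
  · have hyj : y j ≠ 0 := fun h0 => hy0 (hj.trans (funext fun i => by simp [h0]))
    refine ⟨j, ?_⟩
    rw [← supScale_of_sup_eq_one hsup, hj, supScale_mul_const _ hyj]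
    rfl

lemma scaledMaxExtremals_eq_range (hA : maxCycleMean A ≠ 0) :
    scaledMaxExtremals A = Set.range fun j => supScale ((klStar (normalize A))ᵀ j) :=
  Set.ext fun _ => ⟨exists_supScale_klStar_col_eq hA, by
    rintro ⟨j, rfl⟩
    exact supScale_klStar_col_mem hA j⟩

lemma supScale_klStar_col_eq_iff (hA : maxCycleMean A ≠ 0) {i j : Fin n} :
    supScale ((klStar (normalize A))ᵀ i) = supScale ((klStar (normalize A))ᵀ j) ↔
      klStar (normalize A) i j * klStar (normalize A) j i = 1 := by
  have hB := closedWalksLeOne_normalize hA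
  constructor
  · intro h
    have hi := congrFun h i
    have hj := congrFun h j
    simp only [supScale, Matrix.transpose_apply, klStar_self hB, one_mul] at hi hj
    refine mul_right_cancel₀ (inv_ne_zero (sup_klStar_col_ne_zero hA i)) ?_
    rw [one_mul, mul_assoc, hj, ← hi]
  · intro h
    have hji : klStar (normalize A) j i ≠ 0 := right_ne_zero_of_mul_eq_one h
    have hcol : (klStar (normalize A))ᵀ i =
        fun k => klStar (normalize A) k j * klStar (normalize A) j i :=
      funext (klStar_eq_mul_of_mul_eq_one hB h)
    rw [hcol, supScale_mul_const _ hji]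
    rfl

lemma natCard_range_eq_of_apply_eq_iff {α β γ : Type*} {f : α → β} {g : α → γ}
    (h : ∀ a b, f a = f b ↔ g a = g b) : Nat.card (Set.range f) = Nat.card (Set.range g) :=
  Nat.card_congr <| (Setoid.quotientKerEquivRange f).symm.trans <|
    (Quotient.congrRight h).trans (Setoid.quotientKerEquivRange g)

lemma ncard_scaledMaxExtremals (hA : maxCycleMean A ≠ 0) :
    (scaledMaxExtremals A).ncard = Nat.card (NodeClass A) := by
  rw [scaledMaxExtremals_eq_range hA, ← Nat.card_coe_set_eq,
    natCard_range_eq_of_apply_eq_iff (g := toNodeClass A) fun i j => by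
      rw [supScale_klStar_col_eq_iff hA, toNodeClass_eq_iff hA, reflTransGen_criticalEdge_iff hA],
    Set.range_eq_univ.mpr fun s => ⟨s.rep, toNodeClass_rep s⟩, Nat.card_univ]

end Extremals

end MaxAlgebra

/-- the max-algebraic dimension of `V*(A)` equals the linear
dimension of its linear hull `L(C(A))`; both equal `n(C(A)) + |noncritical nodes|`. -/
theorem stmt_19 {n : ℕ} (A : Matrix (Fin n) (Fin n) NNReal)
    (hlam : 0 < maxCycleMean A) :
    (scaledMaxExtremals A).ncard = Module.finrank ℝ (LC A) ∧
    (scaledMaxExtremals A).ncard =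
      Nat.card (Quotient (critSetoid A)) +
        {i : Fin n | ¬ criticalNode A i}.ncard := by
  have hcard := MaxAlgebra.ncard_scaledMaxExtremals hlam.ne'
  refine ⟨hcard.trans (MaxAlgebra.finrank_LC hlam.ne').symm, hcard.trans ?_⟩
  rw [Nat.card_sum, ← Nat.card_coe_set_eq]
  rfl
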